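/- arXiv:2011.10023 — 2 statements merged into one kernel-verified Lean document; each statement's English description precedes it below -/
import Mathlib

section
/- Consider N agents with decision variables x_i ∈ ℝ^{n_i}, x = (x₁,…,x_N) ∈ ℝ^n, where each local objective f_i[t] : ℝ^{n_i} → ℝ is twice differentiable and σ-strongly convex with ν-Lipschitz gradient, and the coupling constraints (the stacked matrix A ∈ ℝ^{m×n} and vector b ∈ ℝ^m) are the same at times t and t+1. Assume F̄[t+1] − F̄[t] is Lipschitz continuous with constant κ. Let x*[t] be the (unique) minimizer of F̄[t] and let y*[t] = (y*_{ij}[t]) be the corresponding dual solution of the consensus formulation, y*_{ij}[t] = −∇_{x_j^i} F̄_i[t] evaluated at the consensus-consistent point built from x*[t]. Let |s|^max be the maximum number of agents coupled by a single constraint. Then ‖x*[t+1] − x*[t]‖ ≤ σ⁻¹κ and ‖y*[t+1] − y*[t]‖ ≤ ‖A‖_F² · ((|s|^max − 1)/|s|^max) · βc · σ⁻¹κ. -/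
/-!
Both smoothed objectives are `σ`-strongly convex for the Euclidean norm of the stacked
variable: the local objectives are, and the softplus penalty `s ↦ log (exp s + 1)` is convex.
Hence a minimizer `x*` has quadratic growth `σ/2 ‖x - x*‖² ≤ F̄ x - F̄ x*`; adding this at
`x*[t]` for `F̄[t]` and at `x*[t+1]` for `F̄[t+1]` bounds `σ ‖Δx‖²` by the change of
`F̄[t+1] - F̄[t]` between the two minimizers, that is by `κ ‖Δx‖`.

For `j ≠ i` only the penalty depends on the copy `x_j^i`, so
`y*_{ij} = -∑_{r ∋ i} (β / |s_r|) sigmoid (c (a_r ⬝ x* - b_r)) a_{rj}`. The sigmoid is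
`1`-Lipschitz, so the coefficient of row `r` moves by at most `(β / |s_r|) c ‖a_r‖ ‖Δx‖`.
By Minkowski's inequality over the rows, row `r` contributes at most that much times
`√(|s_r| - 1) ‖a_r‖` (each `a_{rj}` is seen by the `|s_r| - 1` other agents of the row), and
`√(k - 1) / k ≤ (|s|^max - 1) / |s|^max`.
-/

open scoped Classical RealInnerProductSpace

open Real Finset

noncomputable def softplus (x : ℝ) : ℝ := log (exp x + 1)

lemma log_exp_add_one (x : ℝ) : log (exp x + 1) = softplus x := rfl

lemma hasDerivAt_softplus (x : ℝ) : HasDerivAt softplus (sigmoid x) x := by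
  have hsig : sigmoid x = exp x / (exp x + 1) := by
    rw [sigmoid_def, exp_neg]
    field_simp
  exact hsig ▸ ((hasDerivAt_exp x).add_const 1).log (by positivity)

lemma convexOn_softplus : ConvexOn ℝ Set.univ softplus :=
  Monotone.convexOn_univ_of_deriv (fun x => (hasDerivAt_softplus x).differentiableAt)
    (funext (fun x => (hasDerivAt_softplus x).deriv) ▸ sigmoid_monotone)

lemma lipschitzWith_sigmoid : LipschitzWith 1 sigmoid := by
  refine lipschitzWith_of_nnnorm_deriv_le differentiable_sigmoid fun x => ?_
  rw [← NNReal.coe_le_coe, coe_nnnorm, deriv_sigmoid, Real.norm_eq_abs, NNReal.coe_one,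
    abs_of_nonneg (mul_nonneg (sigmoid_nonneg x) (sub_nonneg.2 (sigmoid_le_one x)))]
  nlinarith [sigmoid_nonneg x, sigmoid_le_one x]

section StrongConvexity

variable {E : Type*} [NormedAddCommGroup E] [NormedSpace ℝ E] {s : Set E} {f g : E → ℝ} {m : ℝ}

lemma StrongConvexOn.add_convexOn (hf : StrongConvexOn s m f) (hg : ConvexOn ℝ s g) :
    StrongConvexOn s m (f + g) := by
  unfold StrongConvexOn
  simpa using hf.add (uniformConvexOn_zero.2 hg)

lemma StrongConvexOn.mul_sq_norm_sub_le_of_isMinOn {x y : E} (hf : StrongConvexOn s m f)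
    (hx : x ∈ s) (hy : y ∈ s) (hmin : IsMinOn f s x) :
    m / 2 * ‖y - x‖ ^ 2 ≤ f y - f x := by
  have hcomb : ∀ l ∈ Set.Ioo (0 : ℝ) 1, (1 - l) * (m / 2 * ‖y - x‖ ^ 2) ≤ f y - f x := by
    rintro l ⟨hl0, hl1⟩
    have hconv := hf.2 hy hx hl0.le (sub_nonneg.2 hl1.le) (add_sub_cancel l 1)
    have hle := hmin (hf.1 hy hx hl0.le (sub_nonneg.2 hl1.le) (add_sub_cancel l 1))
    simp only [smul_eq_mul, Set.mem_ofPred_eq] at hconv hle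
    refine le_of_mul_le_mul_left ?_ hl0
    nlinarith
  have hlim : Filter.Tendsto (fun l : ℝ => (1 - l) * (m / 2 * ‖y - x‖ ^ 2))
      (nhdsWithin 0 (Set.Ioi 0)) (nhds (m / 2 * ‖y - x‖ ^ 2)) := by
    have : Continuous (fun l : ℝ => (1 - l) * (m / 2 * ‖y - x‖ ^ 2)) := by fun_prop
    simpa using (this.tendsto 0).mono_left nhdsWithin_le_nhds
  exact le_of_tendsto hlim (Filter.eventually_of_mem (Ioo_mem_nhdsGT one_pos) hcomb)

lemma norm_sub_le_div_of_isMinOn_of_strongConvexOn {F G : E → ℝ} {x y : E} {σ κ : ℝ}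
    (hσ : 0 < σ) (hκ : 0 ≤ κ) (hF : StrongConvexOn s σ F) (hG : StrongConvexOn s σ G)
    (hx : x ∈ s) (hy : y ∈ s) (hxF : IsMinOn F s x) (hyG : IsMinOn G s y)
    (hlip : |(G x - F x) - (G y - F y)| ≤ κ * ‖x - y‖) :
    ‖y - x‖ ≤ κ / σ := by
  have hFy := hF.mul_sq_norm_sub_le_of_isMinOn hx hy hxF
  have hGx := hG.mul_sq_norm_sub_le_of_isMinOn hy hx hyG
  rw [norm_sub_rev] at hGx hlip
  have hsq : σ * ‖y - x‖ ^ 2 ≤ κ * ‖y - x‖ := by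
    linarith [le_abs_self ((G x - F x) - (G y - F y))]
  rcases (norm_nonneg (y - x)).eq_or_lt with h | h
  · rw [← h]; positivity
  · rw [le_div_iff₀ hσ]
    nlinarith

end StrongConvexity

section InnerProductSpace

variable {E : Type*} [NormedAddCommGroup E] [InnerProductSpace ℝ E]

lemma strongConvexOn_univ_of_subgradient {f : E → ℝ} {g : E → E} {m : ℝ}
    (h : ∀ x y, f y - f x ≥ ⟪g x, y - x⟫ + m / 2 * ‖x - y‖ ^ 2) :
    StrongConvexOn Set.univ m f := by
  refine ⟨convex_univ, fun x _ y _ a b ha hb hab => ?_⟩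
  obtain rfl : b = 1 - a := by linarith
  set z := a • x + (1 - a) • y
  have hx : x - z = (1 - a) • (x - y) := by simp only [z]; module
  have hy : y - z = (-a) • (x - y) := by simp only [z]; module
  have h1 := h z x
  have h2 := h z y
  rw [← neg_sub x z, hx, norm_neg, norm_smul, real_inner_smul_right, Real.norm_eq_abs,
    abs_of_nonneg hb] at h1
  rw [← neg_sub y z, hy, norm_neg, norm_smul, real_inner_smul_right, Real.norm_eq_abs, abs_neg,
    abs_of_nonneg ha] at h2
  simp only [smul_eq_mul]
  nlinarith [mul_le_mul_of_nonneg_left h1.le ha, mul_le_mul_of_nonneg_left h2.le hb]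

lemma convexOn_mul_sum_softplus {ρ : Type*} [Fintype ρ] {q : ℝ} (hq : 0 ≤ q) (c : ℝ)
    (u : ρ → E) (d : ρ → ℝ) :
    ConvexOn ℝ Set.univ (fun x => q * ∑ r, softplus (c * (⟪u r, x⟫ - d r))) := by
  refine ⟨convex_univ, fun x _ y _ a b ha hb hab => ?_⟩
  have hr r : softplus (c * (⟪u r, a • x + b • y⟫ - d r)) ≤
      a * softplus (c * (⟪u r, x⟫ - d r)) + b * softplus (c * (⟪u r, y⟫ - d r)) := by
    have harg : c * (⟪u r, a • x + b • y⟫ - d r) =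
        a * (c * (⟪u r, x⟫ - d r)) + b * (c * (⟪u r, y⟫ - d r)) := by
      rw [inner_add_right, real_inner_smul_right, real_inner_smul_right]
      linear_combination (c * d r) * hab
    simpa [harg] using convexOn_softplus.2 (Set.mem_univ _) (Set.mem_univ _) ha hb hab
  simp only [smul_eq_mul]
  calc q * ∑ r, softplus (c * (⟪u r, a • x + b • y⟫ - d r))
      ≤ q * ∑ r, (a * softplus (c * (⟪u r, x⟫ - d r)) + b * softplus (c * (⟪u r, y⟫ - d r))) :=
        mul_le_mul_of_nonneg_left (sum_le_sum fun r _ => hr r) hq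
    _ = _ := by rw [sum_add_distrib, ← mul_sum, ← mul_sum]; ring

lemma abs_div_mul_sigmoid_sub_le {β c D : ℝ} (hβ : 0 ≤ β) (hc : 0 ≤ c) (k : ℕ) (u x y : E)
    (d : ℝ) (hxy : ‖x - y‖ ≤ D) :
    |β / k * sigmoid (c * (⟪u, x⟫ - d)) - β / k * sigmoid (c * (⟪u, y⟫ - d))| ≤
      β * c * D / k * ‖u‖ := by
  have hsig : |sigmoid (c * (⟪u, x⟫ - d)) - sigmoid (c * (⟪u, y⟫ - d))| ≤ c * (‖u‖ * D) :=
    calc |sigmoid (c * (⟪u, x⟫ - d)) - sigmoid (c * (⟪u, y⟫ - d))|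
        ≤ 1 * |c * (⟪u, x⟫ - d) - c * (⟪u, y⟫ - d)| := by
          simpa [Real.dist_eq] using lipschitzWith_sigmoid.dist_le_mul _ _
      _ = c * |⟪u, x - y⟫| := by
          rw [inner_sub_right, one_mul, ← mul_sub, sub_sub_sub_cancel_right, abs_mul,
            abs_of_nonneg hc]
      _ ≤ c * (‖u‖ * D) := by
          gcongr
          exact (abs_real_inner_le_norm _ _).trans (by gcongr)
  rw [← mul_sub, abs_mul, abs_of_nonneg (by positivity)]
  calc β / k * |sigmoid (c * (⟪u, x⟫ - d)) - sigmoid (c * (⟪u, y⟫ - d))|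
      ≤ β / k * (c * (‖u‖ * D)) := by gcongr
    _ = β * c * D / k * ‖u‖ := by ring

variable [CompleteSpace E]

lemma hasGradientAt_add_sum_mul_softplus {ρ : Type*} (T : Finset ρ) (K c : ℝ) (w d : ρ → ℝ)
    (u : ρ → E) (x : E) :
    HasGradientAt (fun v => K + ∑ r ∈ T, w r * softplus (c * (⟪u r, v - x⟫ + d r)))
      (∑ r ∈ T, (w r * c * sigmoid (c * d r)) • u r) x := by
  have hterm r : HasFDerivAt (fun v => w r * softplus (c * (⟪u r, v - x⟫ + d r)))
      ((w r * c * sigmoid (c * d r)) • innerSL ℝ (u r)) x := by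
    have hlin : HasFDerivAt (fun v => c * (⟪u r, v - x⟫ + d r)) (c • innerSL ℝ (u r)) x :=
      (((innerSL ℝ (u r)).hasFDerivAt.comp x ((hasFDerivAt_id x).sub_const x)).add_const
        (d r)).const_mul c
    have := ((hasDerivAt_softplus _).comp_hasFDerivAt x hlin).const_mul (w r)
    simp only [sub_self, inner_zero_right, zero_add] at this
    refine this.congr_fderiv ?_
    ext v
    simp only [smul_apply, coe_innerSL_apply, smul_eq_mul]
    ring
  rw [hasGradientAt_iff_hasFDerivAt]
  refine ((HasFDerivAt.fun_sum fun r _ => hterm r).const_add K).congr_fderiv ?_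
  ext v
  simp

end InnerProductSpace

section PiLp

variable {ι : Type*} [Fintype ι] {E : ι → Type*} [∀ i, NormedAddCommGroup (E i)]

lemma strongConvexOn_univ_piLp_sum [∀ i, NormedSpace ℝ (E i)] {f : ∀ i, E i → ℝ} {m : ℝ}
    (hf : ∀ i, StrongConvexOn Set.univ m (f i)) :
    StrongConvexOn Set.univ m (fun x : PiLp 2 E => ∑ i, f i (x i)) := by
  refine ⟨convex_univ, fun x _ y _ a b ha hb hab => ?_⟩
  have h i := (hf i).2 (Set.mem_univ (x i)) (Set.mem_univ (y i)) ha hb hab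
  simp only [smul_eq_mul, PiLp.add_apply, PiLp.smul_apply] at h ⊢
  calc ∑ i, f i (a • x i + b • y i)
      ≤ ∑ i, (a * f i (x i) + b * f i (y i) - a * b * (m / 2 * ‖x i - y i‖ ^ 2)) :=
        sum_le_sum fun i _ => h i
    _ = _ := by
        simp only [PiLp.norm_sq_eq_of_L2, PiLp.sub_apply, sum_sub_distrib, sum_add_distrib,
          ← mul_sum]

variable [∀ i, InnerProductSpace ℝ (E i)]

lemma inner_toLp_eq_sum_sum {κ : ι → Type*} [∀ i, Fintype (κ i)]
    (y x : ∀ j, EuclideanSpace ℝ (κ j)) :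
    ⟪WithLp.toLp 2 y, WithLp.toLp 2 x⟫ = ∑ j, ∑ k, y j k * x j k := by
  simp [PiLp.inner_apply, mul_comm]

lemma inner_toLp_update [DecidableEq ι] (y x : ∀ j, E j) (j : ι) (v : E j) :
    ⟪WithLp.toLp 2 y, WithLp.toLp 2 (Function.update x j v)⟫ =
      ⟪WithLp.toLp 2 y, WithLp.toLp 2 x⟫ + ⟪y j, v - x j⟫ := by
  simp only [PiLp.inner_apply]
  rw [← sum_erase_add _ _ (mem_univ j), ← sum_erase_add _ _ (mem_univ j),
    sum_congr rfl fun i hi => by rw [Function.update_of_ne (ne_of_mem_erase hi)],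
    Function.update_self, inner_sub_right]
  ring

lemma gradient_update_add_mul_sum_softplus [DecidableEq ι] [∀ i, CompleteSpace (E i)]
    {ρ : Type*} (T : Finset ρ) (K q c : ℝ) (w b : ρ → ℝ) (A : ρ → ∀ j, E j) (x : ∀ j, E j)
    (j : ι) :
    gradient (fun v => K + q * ∑ r ∈ T, w r *
        softplus (c * (⟪WithLp.toLp 2 (A r), WithLp.toLp 2 (Function.update x j v)⟫ - b r)))
      (x j) =
      ∑ r ∈ T, (q * w r * c * sigmoid (c * (⟪WithLp.toLp 2 (A r), WithLp.toLp 2 x⟫ - b r))) •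
        A r j := by
  have hfun : (fun v => K + q * ∑ r ∈ T, w r *
      softplus (c * (⟪WithLp.toLp 2 (A r), WithLp.toLp 2 (Function.update x j v)⟫ - b r))) =
      fun v => K + ∑ r ∈ T, q * w r *
        softplus (c * (⟪A r j, v - x j⟫ + (⟪WithLp.toLp 2 (A r), WithLp.toLp 2 x⟫ - b r))) := by
    funext v
    simp only [inner_toLp_update, mul_sum, mul_assoc]
    congr 1
    exact sum_congr rfl fun r _ => by ring_nf
  rw [hfun, (hasGradientAt_add_sum_mul_softplus T K c _ _ (fun r => A r j) (x j)).gradient]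

end PiLp

lemma sqrt_sum_norm_sq_sum_le {α ρ : Type*} {F : α → Type*}
    [∀ p, SeminormedAddCommGroup (F p)] (s : Finset α) (T : Finset ρ) (v : ρ → ∀ p, F p) :
    √(∑ p ∈ s, ‖∑ r ∈ T, v r p‖ ^ 2) ≤ ∑ r ∈ T, √(∑ p ∈ s, ‖v r p‖ ^ 2) := by
  have h := norm_sum_le T fun r => WithLp.toLp 2 fun p : s => v r p
  simp only [PiLp.norm_eq_of_L2, WithLp.ofLp_sum, Finset.sum_apply, univ_eq_attach] at h
  rwa [sum_attach s fun p => ‖∑ r ∈ T, v r p‖ ^ 2,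
    sum_congr rfl fun r _ => congrArg sqrt (sum_attach s fun p => ‖v r p‖ ^ 2)] at h

lemma sum_sum_neighbors_le {ι : Type*} [Fintype ι] [DecidableEq ι] (S : Finset ι)
    (Nbr : ι → Finset ι) (hNbr : ∀ i, i ∉ Nbr i) (g : ι → ℝ) (hg : ∀ j, 0 ≤ g j)
    (hgS : ∀ j ∉ S, g j = 0) :
    ∑ i ∈ S, ∑ j ∈ Nbr i, g j ≤ ((#S : ℝ) - 1) * ∑ j, g j := by
  have hi i : ∑ j ∈ Nbr i, g j ≤ ∑ j, g j - g i := by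
    rw [← sum_erase_eq_sub (mem_univ i)]
    exact sum_le_sum_of_subset_of_nonneg
      (fun j hj => mem_erase.2 ⟨fun h => hNbr i (h ▸ hj), mem_univ j⟩) fun j _ _ => hg j
  calc ∑ i ∈ S, ∑ j ∈ Nbr i, g j ≤ ∑ i ∈ S, (∑ j, g j - g i) := sum_le_sum fun i _ => hi i
    _ = ((#S : ℝ) - 1) * ∑ j, g j := by
      rw [sum_sub_distrib, sum_const, nsmul_eq_mul,
        sum_subset (subset_univ S) fun j _ hj => hgS j hj]
      ring

lemma sqrt_sub_one_div_le {k M : ℕ} (hk : 1 ≤ k) (hkM : k ≤ M) :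
    √((k : ℝ) - 1) / k ≤ ((M : ℝ) - 1) / M := by
  have hk' : (1 : ℝ) ≤ k := by exact_mod_cast hk
  have hM : (k : ℝ) ≤ M := by exact_mod_cast hkM
  rcases hk.eq_or_lt with rfl | hk2
  · simp only [Nat.cast_one, sub_self, sqrt_zero, zero_div]
    exact div_nonneg (by linarith) (by linarith)
  have hk2' : (2 : ℝ) ≤ k := by exact_mod_cast hk2
  calc √((k : ℝ) - 1) / k ≤ (k / 2) / k := by
        gcongr
        rw [sqrt_le_left (by positivity)]
        nlinarith
    _ = 1 / 2 := by field_simp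
    _ ≤ ((M : ℝ) - 1) / M := by rw [div_le_div_iff₀ two_pos (by linarith)]; linarith

section RowCombination

variable {ι ρ : Type*} [Fintype ι] [DecidableEq ι] [Fintype ρ] {E : ι → Type*}
  [∀ i, NormedAddCommGroup (E i)] [∀ i, NormedSpace ℝ (E i)]

lemma sqrt_sum_sum_norm_sq_ite_smul_le (Nbr : ι → Finset ι) (hNbr : ∀ i, i ∉ Nbr i)
    (S : Finset ι) (a : ∀ j, E j) (ha : ∀ j ∉ S, a j = 0) {M : ℕ} (hSM : #S ≤ M) {C : ℝ}
    (hC : 0 ≤ C) {γ : ℝ} (hγ : |γ| ≤ C / #S * √(∑ j, ‖a j‖ ^ 2)) :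
    √(∑ i, ∑ j ∈ Nbr i, ‖if i ∈ S then γ • a j else 0‖ ^ 2) ≤
      (∑ j, ‖a j‖ ^ 2) * (((M : ℝ) - 1) / M) * C := by
  set W := ∑ j, ‖a j‖ ^ 2
  have hW : 0 ≤ W := sum_nonneg fun j _ => sq_nonneg _
  rcases S.eq_empty_or_nonempty with rfl | hS
  · have hM : 0 ≤ ((M : ℝ) - 1) / M := by
      rcases M.eq_zero_or_pos with h | h
      · simp [h]
      · exact div_nonneg (by linarith [(Nat.one_le_cast (α := ℝ)).2 h]) (Nat.cast_nonneg M)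
    simpa using mul_nonneg (mul_nonneg hW hM) hC
  have hk : 1 ≤ #S := hS.card_pos
  have hk' : (1 : ℝ) ≤ #S := by exact_mod_cast hk
  have hsum : ∑ i, ∑ j ∈ Nbr i, ‖if i ∈ S then γ • a j else 0‖ ^ 2 ≤
      γ ^ 2 * (((#S : ℝ) - 1) * W) := by
    have hi i : ∑ j ∈ Nbr i, ‖if i ∈ S then γ • a j else 0‖ ^ 2 =
        if i ∈ S then γ ^ 2 * ∑ j ∈ Nbr i, ‖a j‖ ^ 2 else 0 := by
      split_ifs <;> simp [norm_smul, mul_pow, mul_sum]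
    simp only [hi, sum_ite_mem, Finset.univ_inter, ← mul_sum]
    exact mul_le_mul_of_nonneg_left (sum_sum_neighbors_le S Nbr hNbr _ (fun j => sq_nonneg _)
      fun j hj => by simp [ha j hj]) (sq_nonneg γ)
  calc √(∑ i, ∑ j ∈ Nbr i, ‖if i ∈ S then γ • a j else 0‖ ^ 2)
      ≤ |γ| * (√((#S : ℝ) - 1) * √W) := by
        rw [← sqrt_mul (by linarith), ← sqrt_sq_eq_abs, ← sqrt_mul (sq_nonneg γ)]
        exact sqrt_le_sqrt hsum
    _ ≤ C / #S * √W * (√((#S : ℝ) - 1) * √W) := by gcongr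
    _ = √W * √W * (√((#S : ℝ) - 1) / #S) * C := by ring
    _ ≤ W * (((M : ℝ) - 1) / M) * C := by
        rw [mul_self_sqrt hW]
        exact mul_le_mul_of_nonneg_right
          (mul_le_mul_of_nonneg_left (sqrt_sub_one_div_le hk hSM) hW) hC

def rowCombination (S : ρ → Finset ι) (a : ρ → ∀ j, E j) (g : ρ → ℝ) (i j : ι) : E j :=
  ∑ r with i ∈ S r, g r • a r j

lemma sqrt_sum_norm_sq_rowCombination_sub_le (S : ρ → Finset ι) (a : ρ → ∀ j, E j)
    (ha : ∀ r, ∀ j ∉ S r, a r j = 0) (Nbr : ι → Finset ι) (hNbr : ∀ i, i ∉ Nbr i) {M : ℕ}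
    (hM : ∀ r, #(S r) ≤ M) {C : ℝ} (hC : 0 ≤ C) (g g' : ρ → ℝ)
    (hg : ∀ r, |g' r - g r| ≤ C / #(S r) * √(∑ j, ‖a r j‖ ^ 2)) :
    √(∑ i, ∑ j ∈ Nbr i, ‖rowCombination S a g' i j - rowCombination S a g i j‖ ^ 2) ≤
      (∑ r, ∑ j, ‖a r j‖ ^ 2) * (((M : ℝ) - 1) / M) * C := by
  set v : ρ → ∀ p : (_ : ι) × ι, E p.2 := fun r p =>
    if p.1 ∈ S r then (g' r - g r) • a r p.2 else 0
  have hdiff i j : rowCombination S a g' i j - rowCombination S a g i j = ∑ r, v r ⟨i, j⟩ := by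
    simp only [rowCombination, sum_filter, ← sum_sub_distrib, v]
    congr with r
    split_ifs <;> simp [sub_smul]
  calc √(∑ i, ∑ j ∈ Nbr i, ‖rowCombination S a g' i j - rowCombination S a g i j‖ ^ 2)
      = √(∑ p ∈ univ.sigma Nbr, ‖∑ r, v r p‖ ^ 2) := by rw [sum_sigma]; simp only [hdiff]
    _ ≤ ∑ r, √(∑ p ∈ univ.sigma Nbr, ‖v r p‖ ^ 2) := sqrt_sum_norm_sq_sum_le _ _ _
    _ ≤ ∑ r, (∑ j, ‖a r j‖ ^ 2) * (((M : ℝ) - 1) / M) * C := by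
        refine sum_le_sum fun r _ => ?_
        rw [sum_sigma]
        exact sqrt_sum_sum_norm_sq_ite_smul_le Nbr hNbr (S r) (a r) (ha r) (hM r) hC (hg r)
    _ = (∑ r, ∑ j, ‖a r j‖ ^ 2) * (((M : ℝ) - 1) / M) * C := by rw [← sum_mul, ← sum_mul]

end RowCombination

section SmoothedProblem

variable {ι ρ : Type*} [Fintype ι] [Fintype ρ] {κ : ι → Type*} [∀ i, Fintype (κ i)]

lemma strongConvexOn_smoothed_objective {f : ∀ i, EuclideanSpace ℝ (κ i) → ℝ}
    {g : ∀ i, EuclideanSpace ℝ (κ i) → EuclideanSpace ℝ (κ i)} {σ β c : ℝ}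
    (hf : ∀ i x y, f i y - f i x ≥ ⟪g i x, y - x⟫ + σ / 2 * ‖x - y‖ ^ 2) (hβc : 0 ≤ β / c)
    (a : ρ → ∀ j, EuclideanSpace ℝ (κ j)) (b : ρ → ℝ) {F : (∀ i, EuclideanSpace ℝ (κ i)) → ℝ}
    (hF : ∀ x, F x = (∑ i, f i (x i)) +
      β / c * ∑ r, log (exp (c * ((∑ j, ∑ k, a r j k * x j k) - b r)) + 1)) :
    StrongConvexOn Set.univ σ
      (fun z : PiLp 2 (fun i => EuclideanSpace ℝ (κ i)) => F (WithLp.ofLp z)) := by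
  convert (strongConvexOn_univ_piLp_sum fun i => strongConvexOn_univ_of_subgradient
    (hf i)).add_convexOn (convexOn_mul_sum_softplus hβc c (fun r => WithLp.toLp 2 (a r)) b)
    using 1
  funext z
  simp [hF, ← inner_toLp_eq_sum_sum, log_exp_add_one]

lemma gradient_update_smoothed_local [DecidableEq ι] (S : ρ → Finset ι)
    (a : ρ → ∀ j, EuclideanSpace ℝ (κ j)) (b : ρ → ℝ) {β c : ℝ} (hc : c ≠ 0) {i : ι}
    (φ : EuclideanSpace ℝ (κ i) → ℝ) {Fi : (∀ j, EuclideanSpace ℝ (κ j)) → ℝ}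
    (hFi : ∀ z, Fi z = φ (z i) + β / c * ∑ r with i ∈ S r,
      (1 / (#(S r) : ℝ)) * log (exp (c * ((∑ j, ∑ k, a r j k * z j k) - b r)) + 1))
    (x : ∀ j, EuclideanSpace ℝ (κ j)) {j : ι} (hji : j ≠ i) :
    gradient (fun v => Fi (Function.update x j v)) (x j) =
      rowCombination S a
        (fun r => β / #(S r) * sigmoid (c * (⟪WithLp.toLp 2 (a r), WithLp.toLp 2 x⟫ - b r)))
        i j := by
  simp only [hFi, Function.update_of_ne hji.symm, ← inner_toLp_eq_sum_sum, log_exp_add_one]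
  rw [gradient_update_add_mul_sum_softplus _ _ _ _ _ _ a x j, rowCombination]
  refine sum_congr rfl fun r _ => ?_
  field_simp

end SmoothedProblem

theorem online_smoothed_primal_dual_continuity_general
    (N : ℕ) (n : Fin N → ℕ) (m : ℕ)
    (σ κ β c : ℝ) (hσ : 0 < σ) (hκ : 0 ≤ κ) (hβ : 0 < β) (hc : 0 < c)
    -- coupling constraints, identical at times `t` and `t+1`
    (S : Fin m → Finset (Fin N))
    (a : (r : Fin m) → (j : Fin N) → EuclideanSpace ℝ (Fin (n j)))
    (b : Fin m → ℝ)
    (hA0 : ∀ r j, j ∉ S r → a r j = 0)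
    (smax : ℕ) (hsmax : smax = Finset.univ.sup fun r => (S r).card)
    -- local objectives over time: twice differentiable, σ-strongly convex,
    -- ν-Lipschitz gradient
    (f : ℕ → (i : Fin N) → EuclideanSpace ℝ (Fin (n i)) → ℝ)
    (hf_strong : ∀ t i x y, f t i y - f t i x ≥
        ⟪gradient (f t i) x, y - x⟫ + σ / 2 * ‖x - y‖ ^ 2)
    -- smoothed total objective
    (Fbar : ℕ → ((i : Fin N) → EuclideanSpace ℝ (Fin (n i))) → ℝ)
    (hFbar : ∀ t x, Fbar t x = (∑ i, f t i (x i)) +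
        β / c * ∑ r, Real.log (Real.exp (c * ((∑ j, ∑ k, a r j k * x j k) - b r)) + 1))
    -- smoothed augmented local objectives (on local views with local copies)
    (Fbari : ℕ → (i : Fin N) → ((j : Fin N) → EuclideanSpace ℝ (Fin (n j))) → ℝ)
    (hFbari : ∀ t i z, Fbari t i z = f t i (z i) +
        β / c * ∑ r ∈ Finset.univ.filter (fun r => i ∈ S r),
          (1 / ((S r).card : ℝ)) *
            Real.log (Real.exp (c * ((∑ j, ∑ k, a r j k * z j k) - b r)) + 1))
    -- neighbor sets
    (Nbr : Fin N → Finset (Fin N))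
    (hNbr : ∀ i j, j ∈ Nbr i ↔ j ≠ i ∧ ∃ r, i ∈ S r ∧ j ∈ S r)
    (t : ℕ)
    -- `Fbar (t+1) − Fbar t` is κ-Lipschitz
    (hLip : ∀ x x', |(Fbar (t + 1) x - Fbar t x) - (Fbar (t + 1) x' - Fbar t x')| ≤
        κ * Real.sqrt (∑ i, ‖x i - x' i‖ ^ 2))
    -- primal optimal solutions at times `t` and `t+1`
    (xstar : ℕ → (i : Fin N) → EuclideanSpace ℝ (Fin (n i)))
    (hxstar : ∀ τ, (τ = t ∨ τ = t + 1) → ∀ z, Fbar τ (xstar τ) ≤ Fbar τ z)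
    -- dual solutions: `ystar τ i j = − ∇_{x_j^i} Fbari τ i` at the consensus point
    (ystar : ℕ → (i : Fin N) → (j : Fin N) → EuclideanSpace ℝ (Fin (n j)))
    (hystar : ∀ τ i j, ystar τ i j =
        - gradient (fun v => Fbari τ i (Function.update (xstar τ) j v)) (xstar τ j)) :
    Real.sqrt (∑ i, ‖xstar (t + 1) i - xstar t i‖ ^ 2) ≤ κ / σ ∧
    Real.sqrt (∑ i, ∑ j ∈ Nbr i, ‖ystar (t + 1) i j - ystar t i j‖ ^ 2) ≤
      (∑ r, ∑ j, ‖a r j‖ ^ 2) * (((smax : ℝ) - 1) / (smax : ℝ)) * β * c * (κ / σ) := by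
  have hprimal : ‖WithLp.toLp 2 (xstar (t + 1)) - WithLp.toLp 2 (xstar t)‖ ≤ κ / σ := by
    have hconvex τ := strongConvexOn_smoothed_objective (hf_strong τ) (div_nonneg hβ.le hc.le)
      a b (hFbar τ)
    refine norm_sub_le_div_of_isMinOn_of_strongConvexOn hσ hκ (hconvex t) (hconvex (t + 1))
      trivial trivial (fun z _ => hxstar t (.inl rfl) _)
      (fun z _ => hxstar (t + 1) (.inr rfl) _) ?_
    simpa [PiLp.norm_eq_of_L2] using hLip (xstar t) (xstar (t + 1))
  set q : ℕ → Fin m → ℝ := fun τ r =>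
    β / #(S r) * sigmoid (c * (⟪WithLp.toLp 2 (a r), WithLp.toLp 2 (xstar τ)⟫ - b r))
  have hdual τ i : ∀ j ∈ Nbr i, ystar τ i j = -rowCombination S a (q τ) i j := fun j hj => by
    rw [hystar, gradient_update_smoothed_local S a b hc.ne' (f τ i) (hFbari τ i) _
      ((hNbr i j).1 hj).1]
  have hq r : |q t r - q (t + 1) r| ≤ β * c * (κ / σ) / #(S r) * √(∑ j, ‖a r j‖ ^ 2) := by
    simpa [PiLp.norm_eq_of_L2] using abs_div_mul_sigmoid_sub_le hβ.le hc.le _ _ _ _ _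
      ((norm_sub_rev _ _).trans_le hprimal)
  refine ⟨by simpa [PiLp.norm_eq_of_L2] using hprimal, ?_⟩
  calc √(∑ i, ∑ j ∈ Nbr i, ‖ystar (t + 1) i j - ystar t i j‖ ^ 2)
      = √(∑ i, ∑ j ∈ Nbr i,
          ‖rowCombination S a (q t) i j - rowCombination S a (q (t + 1)) i j‖ ^ 2) := by
        refine congrArg sqrt (sum_congr rfl fun i _ => sum_congr rfl fun j hj => ?_)
        rw [hdual _ i j hj, hdual _ i j hj, neg_sub_neg]
    _ ≤ (∑ r, ∑ j, ‖a r j‖ ^ 2) * (((smax : ℝ) - 1) / smax) * (β * c * (κ / σ)) :=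
        sqrt_sum_norm_sq_rowCombination_sub_le S a hA0 Nbr
          (fun i hi => ((hNbr i i).1 hi).1 rfl)
          (fun r => hsmax ▸ le_sup (f := fun r => #(S r)) (mem_univ r)) (by positivity) _ _ hq
    _ = _ := by ring

/-- Proposition 2 of the paper, continuity of the primal and dual
solutions of the smoothed problem.

Setup: `N` agents, agent `i` has variable `x_i ∈ ℝ^{n i}`; the coupling constraints
(the same at times `t` and `t+1`) are represented row-by-row: row `r ∈ Fin m` has
coupled agent set `S r`, coefficient block `a r j ∈ ℝ^{n j}` (zero when `j ∉ S r`)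
and right-hand side `b r`, so `(Ax)_r = Σ_j a r j ⬝ x_j`,
`‖A‖_F² = Σ_r Σ_j ‖a r j‖²`, and `|s|^max = max_r |S r|`.

Each local objective `f t i` is twice continuously differentiable, `σ`-strongly
convex (`f(y) − f(x) ≥ ⟪∇f(x), y−x⟫ + (σ/2)‖x−y‖²`) and has `ν`-Lipschitz gradient.
`Fbar t` is the smoothed (LogSumExp) total objective, `Fbari t i` the smoothed
augmented local objective of agent `i` as a function of its local view
`z : (j : Fin N) → ℝ^{n j}` (where `z i` is its own variable and `z j` the local copy
`x_j^i`; the weight of a row in `S r` is `1/|S r|`).  `Fbar (t+1) − Fbar t` is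
Lipschitz with constant `κ` (w.r.t. the Euclidean norm of the stacked vector),
`xstar τ` minimizes `Fbar τ` for `τ ∈ {t, t+1}`, and the dual solution is
`ystar τ i j = −∇_{x_j^i} Fbari τ i` evaluated at the consensus-consistent point
built from `xstar τ`.  Then `‖x*[t+1] − x*[t]‖ ≤ κ/σ` and
`‖y*[t+1] − y*[t]‖ ≤ ‖A‖_F² ((|s|^max − 1)/|s|^max) β c κ/σ`, where
`‖y‖² = Σ_i Σ_{j ∈ Nbr i} ‖y_{ij}‖²`. -/
theorem online_smoothed_primal_dual_continuity
    (N : ℕ) (n : Fin N → ℕ) (m : ℕ)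
    (σ ν κ β c : ℝ) (hσ : 0 < σ) (hν : 0 < ν) (hκ : 0 ≤ κ) (hβ : 0 < β) (hc : 0 < c)
    -- coupling constraints, identical at times `t` and `t+1`
    (S : Fin m → Finset (Fin N))
    (a : (r : Fin m) → (j : Fin N) → EuclideanSpace ℝ (Fin (n j)))
    (b : Fin m → ℝ)
    (hA0 : ∀ r j, j ∉ S r → a r j = 0)
    (smax : ℕ) (hsmax : smax = Finset.univ.sup fun r => (S r).card)
    -- local objectives over time: twice differentiable, σ-strongly convex,
    -- ν-Lipschitz gradient
    (f : ℕ → (i : Fin N) → EuclideanSpace ℝ (Fin (n i)) → ℝ)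
    (hf_smooth : ∀ t i, ContDiff ℝ 2 (f t i))
    (hf_strong : ∀ t i x y, f t i y - f t i x ≥
        ⟪gradient (f t i) x, y - x⟫ + σ / 2 * ‖x - y‖ ^ 2)
    (hf_gradlip : ∀ t i x y,
        ‖gradient (f t i) x - gradient (f t i) y‖ ≤ ν * ‖x - y‖)
    -- smoothed total objective
    (Fbar : ℕ → ((i : Fin N) → EuclideanSpace ℝ (Fin (n i))) → ℝ)
    (hFbar : ∀ t x, Fbar t x = (∑ i, f t i (x i)) +
        β / c * ∑ r, Real.log (Real.exp (c * ((∑ j, ∑ k, a r j k * x j k) - b r)) + 1))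
    -- smoothed augmented local objectives (on local views with local copies)
    (Fbari : ℕ → (i : Fin N) → ((j : Fin N) → EuclideanSpace ℝ (Fin (n j))) → ℝ)
    (hFbari : ∀ t i z, Fbari t i z = f t i (z i) +
        β / c * ∑ r ∈ Finset.univ.filter (fun r => i ∈ S r),
          (1 / ((S r).card : ℝ)) *
            Real.log (Real.exp (c * ((∑ j, ∑ k, a r j k * z j k) - b r)) + 1))
    -- neighbor sets
    (Nbr : Fin N → Finset (Fin N))
    (hNbr : ∀ i j, j ∈ Nbr i ↔ j ≠ i ∧ ∃ r, i ∈ S r ∧ j ∈ S r)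
    (t : ℕ)
    -- `Fbar (t+1) − Fbar t` is κ-Lipschitz
    (hLip : ∀ x x', |(Fbar (t + 1) x - Fbar t x) - (Fbar (t + 1) x' - Fbar t x')| ≤
        κ * Real.sqrt (∑ i, ‖x i - x' i‖ ^ 2))
    -- primal optimal solutions at times `t` and `t+1`
    (xstar : ℕ → (i : Fin N) → EuclideanSpace ℝ (Fin (n i)))
    (hxstar : ∀ τ, (τ = t ∨ τ = t + 1) → ∀ z, Fbar τ (xstar τ) ≤ Fbar τ z)
    -- dual solutions: `ystar τ i j = − ∇_{x_j^i} Fbari τ i` at the consensus point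
    (ystar : ℕ → (i : Fin N) → (j : Fin N) → EuclideanSpace ℝ (Fin (n j)))
    (hystar : ∀ τ i j, ystar τ i j =
        - gradient (fun v => Fbari τ i (Function.update (xstar τ) j v)) (xstar τ j)) :
    Real.sqrt (∑ i, ‖xstar (t + 1) i - xstar t i‖ ^ 2) ≤ κ / σ ∧
    Real.sqrt (∑ i, ∑ j ∈ Nbr i, ‖ystar (t + 1) i j - ystar t i j‖ ^ 2) ≤
      (∑ r, ∑ j, ‖a r j‖ ^ 2) * (((smax : ℝ) - 1) / (smax : ℝ)) * β * c * (κ / σ) :=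
  online_smoothed_primal_dual_continuity_general N n m σ κ β c hσ hκ hβ hc S a b hA0 smax hsmax f
    hf_strong Fbar hFbar Fbari hFbari Nbr hNbr t hLip xstar hxstar ystar hystar
end

section
/- Let α : ℝ → ℝ be locally Lipschitz, strictly increasing, and satisfy α(0) = 0, and let h : [0,∞) → ℝ be differentiable with h'(t) ≥ −α(h(t)) for all t ≥ 0. If h(0) ≥ 0, then h(t) ≥ 0 for all t ≥ 0. -/
/-- Let `α : ℝ → ℝ` be locally Lipschitz, strictly increasing, with
`α(0) = 0` (an extended class-K function), and let `h : [0,∞) → ℝ` be differentiable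
with `h'(t) ≥ −α(h(t))` for all `t ≥ 0`.  If `h(0) ≥ 0`, then `h(t) ≥ 0` for all
`t ≥ 0` (forward invariance of the safe set under the CBF condition). -/
theorem cbf_forward_invariance
    (α : ℝ → ℝ) (hα_lip : LocallyLipschitz α) (hα_mono : StrictMono α) (hα0 : α 0 = 0)
    (h : ℝ → ℝ)
    (hdiff : ∀ t, 0 ≤ t → DifferentiableAt ℝ h t)
    (hineq : ∀ t, 0 ≤ t → deriv h t ≥ -α (h t))
    (h0 : 0 ≤ h 0) :
    ∀ t, 0 ≤ t → 0 ≤ h t := by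
  intro T hT
  by_contra hneg
  push_neg at hneg
  -- h is continuous on [0, T]
  have hcont : ContinuousOn h (Set.Icc 0 T) := fun x hx =>
    (hdiff x hx.1).continuousAt.continuousWithinAt
  -- the set of times in [0,T] where h is nonnegative
  set S : Set ℝ := Set.Icc 0 T ∩ h ⁻¹' Set.Ici 0 with hS
  have hS0 : (0 : ℝ) ∈ S := ⟨⟨le_refl 0, hT⟩, h0⟩
  have hSne : S.Nonempty := ⟨0, hS0⟩
  have hSbdd : BddAbove S := ⟨T, fun x hx => hx.1.2⟩
  have hSclosed : IsClosed S :=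
    hcont.preimage_isClosed_of_isClosed isClosed_Icc isClosed_Ici
  set t₁ := sSup S with ht₁
  have ht₁S : t₁ ∈ S := hSclosed.csSup_mem hSne hSbdd
  have ht₁0 : 0 ≤ t₁ := ht₁S.1.1
  have ht₁T : t₁ ≤ T := ht₁S.1.2
  have ht₁h : 0 ≤ h t₁ := ht₁S.2
  have ht₁lt : t₁ < T := by
    rcases lt_or_eq_of_le ht₁T with hlt | heq
    · exact hlt
    · exact absurd (heq ▸ ht₁h) (not_le.mpr hneg)
  -- for t in (t₁, T], h t < 0
  have hnegOn : ∀ t ∈ Set.Ioc t₁ T, h t < 0 := by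
    intro t ht
    by_contra hge
    push_neg at hge
    have : t ∈ S := ⟨⟨le_trans ht₁0 ht.1.le, ht.2⟩, hge⟩
    exact absurd (le_csSup hSbdd this) (not_le.mpr ht.1)
  -- h is strictly monotone on [t₁, T]
  have hmono : StrictMonoOn h (Set.Icc t₁ T) := by
    apply strictMonoOn_of_deriv_pos (convex_Icc t₁ T)
      (fun x hx => (hdiff x (le_trans ht₁0 hx.1)).continuousAt.continuousWithinAt)
    intro x hx
    rw [interior_Icc] at hx
    have hx0 : 0 ≤ x := le_trans ht₁0 hx.1.le
    have hhx : h x < 0 := hnegOn x ⟨hx.1, hx.2.le⟩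
    have : α (h x) < 0 := hα0 ▸ hα_mono hhx
    linarith [hineq x hx0]
  have := hmono ⟨le_refl t₁, ht₁T⟩ ⟨ht₁T, le_refl T⟩ ht₁lt
  linarith
end
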